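/- arXiv:math/0011229 — 4 statements merged into one kernel-verified Lean document; each statement's English description precedes it below -/
import Mathlib

section
/- Let T, S ∈ L(X, Y) and let U ⊆ ℂ be open and connected. Suppose there exist closed subspaces E ⊆ X and F ⊆ Y such that X = N(T - λS) ⊕ E and Y = R(T - λS) ⊕ F for all λ ∈ U (fixed complements). Then there exists a function G : U → L(Y, X) such that for all λ, μ ∈ U: (1) (T - λS) G(λ) (T - λS) = T - λS; (2) G(λ) (T - λS) G(λ) = G(λ); (3) G(λ) - G(μ) = (λ - μ) G(λ) S G(μ). -/
/-! The decompositions `X = N(A) ⊕ E` and `Y = R(A) ⊕ F` make `(e, f) ↦ A e + f` a bijection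
`E × F → Y`, hence (open mapping theorem) an isomorphism of Banach spaces; composing its inverse
with the projection onto `E` gives a bounded generalized inverse `G` of `A` with `G (A e + f) = e`.
For two operators `A`, `B` sharing the complements `E` and `F`, evaluating at `y = B e + f` gives
`G_A - G_B = G_A (B - A) G_B`, which for `A = T - λS`, `B = T - μS` is the resolvent identity. -/

namespace ContinuousLinearMap

variable {𝕜 X Y : Type*} [NontriviallyNormedField 𝕜]
  [NormedAddCommGroup X] [NormedSpace 𝕜 X] [NormedAddCommGroup Y] [NormedSpace 𝕜 Y]
  {A B : X →L[𝕜] Y} {E : Submodule 𝕜 X} {F : Submodule 𝕜 Y}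

variable (A E F) in
def addCompl : E × F →L[𝕜] Y :=
  (A ∘L E.subtypeL).coprod F.subtypeL

@[simp]
lemma addCompl_apply (p : E × F) : addCompl A E F p = A p.1 + p.2 := rfl

lemma exists_apply_add_eq (hkerE : Codisjoint (LinearMap.ker (A : X →ₗ[𝕜] Y)) E)
    (hrangeF : Codisjoint (LinearMap.range (A : X →ₗ[𝕜] Y)) F) (y : Y) :
    ∃ e ∈ E, ∃ f ∈ F, A e + f = y := by
  obtain ⟨_, ⟨x, rfl⟩, f, hf, rfl⟩ :=
    Submodule.mem_sup.mp (hrangeF.eq_top ▸ Submodule.mem_top : y ∈ _ ⊔ F)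
  obtain ⟨k, hk, e, he, rfl⟩ :=
    Submodule.mem_sup.mp (hkerE.eq_top ▸ Submodule.mem_top : x ∈ _ ⊔ E)
  refine ⟨e, he, f, hf, ?_⟩
  simp only [coe_coe, map_add, LinearMap.mem_ker.mp hk, zero_add]

lemma eq_zero_of_apply_add_eq_zero (hkerE : Disjoint (LinearMap.ker (A : X →ₗ[𝕜] Y)) E)
    (hrangeF : Disjoint (LinearMap.range (A : X →ₗ[𝕜] Y)) F) {e : X} {f : Y}
    (he : e ∈ E) (hf : f ∈ F) (h : A e + f = 0) : e = 0 ∧ f = 0 := by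
  have hAe : A e = -f := eq_neg_of_add_eq_zero_left h
  have hAe0 : A e = 0 :=
    Submodule.disjoint_def.mp hrangeF _ ⟨e, rfl⟩ (hAe ▸ F.neg_mem hf)
  refine ⟨Submodule.disjoint_def.mp hkerE e hAe0 he, ?_⟩
  rwa [hAe0, zero_add] at h

lemma addCompl_bijective (hkerE : IsCompl (LinearMap.ker (A : X →ₗ[𝕜] Y)) E)
    (hrangeF : IsCompl (LinearMap.range (A : X →ₗ[𝕜] Y)) F) :
    Function.Bijective (addCompl A E F) := by
  refine ⟨(injective_iff_map_eq_zero _).mpr fun ⟨⟨e, he⟩, ⟨f, hf⟩⟩ h => ?_, fun y => ?_⟩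
  · obtain ⟨rfl, rfl⟩ := eq_zero_of_apply_add_eq_zero hkerE.disjoint hrangeF.disjoint he hf h
    rfl
  · obtain ⟨e, he, f, hf, rfl⟩ := exists_apply_add_eq hkerE.codisjoint hrangeF.codisjoint y
    exact ⟨(⟨e, he⟩, ⟨f, hf⟩), rfl⟩

variable [CompleteSpace E] [CompleteSpace F] [CompleteSpace Y]

/-- The generalized inverse of `A` with range `E` and kernel `F`. -/
noncomputable def generalizedInverse (hkerE : IsCompl (LinearMap.ker (A : X →ₗ[𝕜] Y)) E)
    (hrangeF : IsCompl (LinearMap.range (A : X →ₗ[𝕜] Y)) F) : Y →L[𝕜] X :=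
  E.subtypeL ∘L fst 𝕜 E F ∘L
    ((ContinuousLinearEquiv.ofBijective (addCompl A E F)
      (LinearMap.ker_eq_bot.mpr (addCompl_bijective hkerE hrangeF).1)
      (LinearMap.range_eq_top.mpr (addCompl_bijective hkerE hrangeF).2)).symm : Y →L[𝕜] E × F)

variable (hkerE : IsCompl (LinearMap.ker (A : X →ₗ[𝕜] Y)) E)
  (hrangeF : IsCompl (LinearMap.range (A : X →ₗ[𝕜] Y)) F)

lemma generalizedInverse_apply_add {e : X} {f : Y} (he : e ∈ E) (hf : f ∈ F) :
    generalizedInverse hkerE hrangeF (A e + f) = e := by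
  have h := ContinuousLinearEquiv.ofBijective_symm_apply_apply (addCompl A E F)
    (LinearMap.ker_eq_bot.mpr (addCompl_bijective hkerE hrangeF).1)
    (LinearMap.range_eq_top.mpr (addCompl_bijective hkerE hrangeF).2) (⟨e, he⟩, ⟨f, hf⟩)
  simp only [addCompl_apply] at h
  simp [generalizedInverse, h]

lemma generalizedInverse_apply_apply {e : X} (he : e ∈ E) :
    generalizedInverse hkerE hrangeF (A e) = e := by
  simpa using generalizedInverse_apply_add hkerE hrangeF he F.zero_mem

lemma generalizedInverse_apply_of_mem {f : Y} (hf : f ∈ F) :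
    generalizedInverse hkerE hrangeF f = 0 := by
  simpa using generalizedInverse_apply_add hkerE hrangeF E.zero_mem hf

lemma comp_generalizedInverse_comp : A ∘L generalizedInverse hkerE hrangeF ∘L A = A := by
  ext x
  obtain ⟨k, hk, e, he, rfl⟩ :=
    Submodule.mem_sup.mp (hkerE.codisjoint.eq_top ▸ Submodule.mem_top : x ∈ _ ⊔ E)
  have hAk : A k = 0 := hk
  simp [hAk, generalizedInverse_apply_apply hkerE hrangeF he]

lemma generalizedInverse_comp_generalizedInverse :
    generalizedInverse hkerE hrangeF ∘L A ∘L generalizedInverse hkerE hrangeF =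
      generalizedInverse hkerE hrangeF := by
  ext y
  obtain ⟨e, he, f, hf, rfl⟩ := exists_apply_add_eq hkerE.codisjoint hrangeF.codisjoint y
  simp [generalizedInverse_apply_add hkerE hrangeF he hf,
    generalizedInverse_apply_apply hkerE hrangeF he]

lemma generalizedInverse_sub_generalizedInverse
    (hkerE' : IsCompl (LinearMap.ker (B : X →ₗ[𝕜] Y)) E)
    (hrangeF' : IsCompl (LinearMap.range (B : X →ₗ[𝕜] Y)) F) :
    generalizedInverse hkerE hrangeF - generalizedInverse hkerE' hrangeF' =
      generalizedInverse hkerE hrangeF ∘L (B - A) ∘L generalizedInverse hkerE' hrangeF' := by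
  ext y
  obtain ⟨e, he, f, hf, rfl⟩ := exists_apply_add_eq hkerE'.codisjoint hrangeF'.codisjoint y
  simp [generalizedInverse_apply_add hkerE' hrangeF' he hf,
    generalizedInverse_apply_of_mem hkerE hrangeF hf,
    generalizedInverse_apply_apply hkerE hrangeF he]

end ContinuousLinearMap

open ContinuousLinearMap in
theorem fixed_complements_implies_generalized_resolvent_general
    {X Y : Type*} [NormedAddCommGroup X] [NormedSpace ℂ X] [CompleteSpace X]
    [NormedAddCommGroup Y] [NormedSpace ℂ Y] [CompleteSpace Y]
    (T S : X →L[ℂ] Y) (U : Set ℂ)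
    (E : Submodule ℂ X) (F : Submodule ℂ Y)
    (hE : IsClosed (E : Set X)) (hF : IsClosed (F : Set Y))
    (hXE : ∀ lam ∈ U, IsCompl (LinearMap.ker ((T - lam • S : X →L[ℂ] Y) : X →ₗ[ℂ] Y)) E)
    (hYF : ∀ lam ∈ U, IsCompl (LinearMap.range ((T - lam • S : X →L[ℂ] Y) : X →ₗ[ℂ] Y)) F) :
    ∃ G : ℂ → (Y →L[ℂ] X),
      (∀ lam ∈ U, (T - lam • S).comp ((G lam).comp (T - lam • S)) = T - lam • S) ∧
      (∀ lam ∈ U, (G lam).comp ((T - lam • S).comp (G lam)) = G lam) ∧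
      (∀ lam ∈ U, ∀ mu ∈ U,
        G lam - G mu = (lam - mu) • ((G lam).comp (S.comp (G mu)))) := by
  classical
  have := hE.completeSpace_coe
  have := hF.completeSpace_coe
  let G : ℂ → (Y →L[ℂ] X) := fun lam =>
    if h : lam ∈ U then generalizedInverse (hXE lam h) (hYF lam h) else 0
  have hG : ∀ lam (h : lam ∈ U), G lam = generalizedInverse (hXE lam h) (hYF lam h) :=
    fun lam h => dif_pos h
  refine ⟨G, fun lam h => ?_, fun lam h => ?_, fun lam hl mu hm => ?_⟩
  · rw [hG lam h]
    exact comp_generalizedInverse_comp _ _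
  · rw [hG lam h]
    exact generalizedInverse_comp_generalizedInverse _ _
  · rw [hG lam hl, hG mu hm, generalizedInverse_sub_generalizedInverse,
      sub_sub_sub_cancel_left, ← sub_smul, smul_comp, comp_smul]

/-- If the pencil `λ ↦ T - λS` has fixed complements on an open connected
set `U`, then it admits a generalized resolvent on `U`. -/
theorem fixed_complements_implies_generalized_resolvent
    {X Y : Type*} [NormedAddCommGroup X] [NormedSpace ℂ X] [CompleteSpace X]
    [NormedAddCommGroup Y] [NormedSpace ℂ Y] [CompleteSpace Y]
    (T S : X →L[ℂ] Y) (U : Set ℂ) (hU : IsOpen U) (hUconn : IsConnected U)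
    (E : Submodule ℂ X) (F : Submodule ℂ Y)
    (hE : IsClosed (E : Set X)) (hF : IsClosed (F : Set Y))
    (hXE : ∀ lam ∈ U, IsCompl (LinearMap.ker ((T - lam • S : X →L[ℂ] Y) : X →ₗ[ℂ] Y)) E)
    (hYF : ∀ lam ∈ U, IsCompl (LinearMap.range ((T - lam • S : X →L[ℂ] Y) : X →ₗ[ℂ] Y)) F) :
    ∃ G : ℂ → (Y →L[ℂ] X),
      (∀ lam ∈ U, (T - lam • S).comp ((G lam).comp (T - lam • S)) = T - lam • S) ∧
      (∀ lam ∈ U, (G lam).comp ((T - lam • S).comp (G lam)) = G lam) ∧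
      (∀ lam ∈ U, ∀ mu ∈ U,
        G lam - G mu = (lam - mu) • ((G lam).comp (S.comp (G mu)))) :=
  fixed_complements_implies_generalized_resolvent_general T S U E F hE hF hXE hYF
end

section
/- Let T, S ∈ L(X, Y), U ⊆ ℂ open and connected, and suppose G : U → L(Y, X) is a generalized resolvent of the pencil λ ↦ T - λS on U, i.e., (T - λS)G(λ)(T - λS) = T - λS, G(λ)(T - λS)G(λ) = G(λ), and G(λ) - G(μ) = (λ - μ)G(λ)SG(μ) for all λ, μ ∈ U. Then the range R(G(λ)) is the same subspace for all λ ∈ U. -/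
/-! A generalized resolvent satisfies `G μ = G λ (1 - (λ - μ) S G μ)`, a rearrangement of the
resolvent identity, so `R(G μ) ⊆ R(G λ)`; exchanging `λ` and `μ` gives equality. -/

namespace LinearMap

theorem range_le_range_of_sub_eq_smul_comp {R M N : Type*} [CommRing R] [AddCommGroup M]
    [AddCommGroup N] [Module R M] [Module R N] {A B : N →ₗ[R] M} {S : M →ₗ[R] N} {c : R}
    (h : A - B = c • A ∘ₗ S ∘ₗ B) : range B ≤ range A := by
  have hB : B = A ∘ₗ (id - c • S ∘ₗ B) := by
    rw [comp_sub, comp_smul, comp_id, ← h, sub_sub_cancel]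
  rw [hB]
  exact range_comp_le_range _ _

end LinearMap

theorem generalized_resolvent_constant_range_general
    {X Y : Type*} [NormedAddCommGroup X] [NormedSpace ℂ X]
    [NormedAddCommGroup Y] [NormedSpace ℂ Y]
    (S : X →L[ℂ] Y) (U : Set ℂ)
    (G : ℂ → (Y →L[ℂ] X))
    (h3 : ∀ lam ∈ U, ∀ mu ∈ U,
      G lam - G mu = (lam - mu) • ((G lam).comp (S.comp (G mu)))) :
    ∀ lam ∈ U, ∀ mu ∈ U, LinearMap.range (G lam : Y →ₗ[ℂ] X) = LinearMap.range (G mu : Y →ₗ[ℂ] X) := by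
  have range_le : ∀ lam ∈ U, ∀ mu ∈ U,
      LinearMap.range (G mu : Y →ₗ[ℂ] X) ≤ LinearMap.range (G lam : Y →ₗ[ℂ] X) :=
    fun lam hlam mu hmu => LinearMap.range_le_range_of_sub_eq_smul_comp <| by
      simpa using congrArg ContinuousLinearMap.toLinearMap (h3 lam hlam mu hmu)
  intro lam hlam mu hmu
  exact le_antisymm (range_le mu hmu lam hlam) (range_le lam hlam mu hmu)

/-- The range of a generalized resolvent of the pencil `λ ↦ T - λS`
on an open connected set `U` is the same subspace for all `λ ∈ U`. -/
theorem generalized_resolvent_constant_range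
    {X Y : Type*} [NormedAddCommGroup X] [NormedSpace ℂ X] [CompleteSpace X]
    [NormedAddCommGroup Y] [NormedSpace ℂ Y] [CompleteSpace Y]
    (T S : X →L[ℂ] Y) (U : Set ℂ) (hU : IsOpen U) (hUconn : IsConnected U)
    (G : ℂ → (Y →L[ℂ] X))
    (h1 : ∀ lam ∈ U, (T - lam • S).comp ((G lam).comp (T - lam • S)) = T - lam • S)
    (h2 : ∀ lam ∈ U, (G lam).comp ((T - lam • S).comp (G lam)) = G lam)
    (h3 : ∀ lam ∈ U, ∀ mu ∈ U,
      G lam - G mu = (lam - mu) • ((G lam).comp (S.comp (G mu)))) :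
    ∀ lam ∈ U, ∀ mu ∈ U, LinearMap.range (G lam : Y →ₗ[ℂ] X) = LinearMap.range (G mu : Y →ₗ[ℂ] X) :=
  generalized_resolvent_constant_range_general S U G h3
end

section
/- Let T, S ∈ L(X, Y), U ⊆ ℂ open and connected, and G a generalized resolvent of the pencil λ ↦ T - λS on U. Then the kernel N(G(λ)) is the same closed subspace of Y for all λ ∈ U. -/
theorem ContinuousLinearMap.ker_le_ker_of_sub_eq_smul_comp {𝕜 X Y : Type*} [NontriviallyNormedField 𝕜]
    [NormedAddCommGroup X] [NormedSpace 𝕜 X] [NormedAddCommGroup Y] [NormedSpace 𝕜 Y]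
    {A B : Y →L[𝕜] X} {S : X →L[𝕜] Y} {c : 𝕜} (h : A - B = c • A.comp (S.comp B)) :
    LinearMap.ker (B : Y →ₗ[𝕜] X) ≤ LinearMap.ker (A : Y →ₗ[𝕜] X) := by
  intro y (hy : B y = 0)
  simpa [hy] using congrArg (· y) h

theorem generalized_resolvent_constant_kernel_general
    {X Y : Type*} [NormedAddCommGroup X] [NormedSpace ℂ X]
    [NormedAddCommGroup Y] [NormedSpace ℂ Y]
    (S : X →L[ℂ] Y) (U : Set ℂ)
    (G : ℂ → (Y →L[ℂ] X))
    (h3 : ∀ lam ∈ U, ∀ mu ∈ U,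
      G lam - G mu = (lam - mu) • ((G lam).comp (S.comp (G mu)))) :
    (∀ lam ∈ U, ∀ mu ∈ U, LinearMap.ker (G lam : Y →ₗ[ℂ] X) = LinearMap.ker (G mu : Y →ₗ[ℂ] X)) ∧
    (∀ lam ∈ U, IsClosed ((LinearMap.ker (G lam : Y →ₗ[ℂ] X) : Submodule ℂ Y) : Set Y)) :=
  ⟨fun lam hlam mu hmu => le_antisymm
      (ContinuousLinearMap.ker_le_ker_of_sub_eq_smul_comp (h3 mu hmu lam hlam))
      (ContinuousLinearMap.ker_le_ker_of_sub_eq_smul_comp (h3 lam hlam mu hmu)),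
    fun lam _ => (G lam).isClosed_ker⟩

/-- The kernel of a generalized resolvent of the pencil `λ ↦ T - λS`
on an open connected set `U` is the same closed subspace of `Y` for all `λ ∈ U`. -/
theorem generalized_resolvent_constant_kernel
    {X Y : Type*} [NormedAddCommGroup X] [NormedSpace ℂ X] [CompleteSpace X]
    [NormedAddCommGroup Y] [NormedSpace ℂ Y] [CompleteSpace Y]
    (T S : X →L[ℂ] Y) (U : Set ℂ) (hU : IsOpen U) (hUconn : IsConnected U)
    (G : ℂ → (Y →L[ℂ] X))
    (h1 : ∀ lam ∈ U, (T - lam • S).comp ((G lam).comp (T - lam • S)) = T - lam • S)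
    (h2 : ∀ lam ∈ U, (G lam).comp ((T - lam • S).comp (G lam)) = G lam)
    (h3 : ∀ lam ∈ U, ∀ mu ∈ U,
      G lam - G mu = (lam - mu) • ((G lam).comp (S.comp (G mu)))) :
    (∀ lam ∈ U, ∀ mu ∈ U, LinearMap.ker (G lam : Y →ₗ[ℂ] X) = LinearMap.ker (G mu : Y →ₗ[ℂ] X)) ∧
    (∀ lam ∈ U, IsClosed ((LinearMap.ker (G lam : Y →ₗ[ℂ] X) : Submodule ℂ Y) : Set Y)) :=
  generalized_resolvent_constant_kernel_general S U G h3
end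

section
/- Let T, S ∈ L(X, Y) with A(λ) := T - λS. Suppose G(λ), G(μ) are generalized inverses of A(λ), A(μ) respectively whose kernels both equal a fixed subspace F and whose ranges both equal a fixed subspace E, where X = N(A(λ)) ⊕ E = N(A(μ)) ⊕ E and Y = R(A(λ)) ⊕ F = R(A(μ)) ⊕ F. Then G(λ) - G(μ) = (λ - μ) G(λ) S G(μ). -/
/-! Both sides are compared through `Gλ (A(μ) - A(λ)) Gμ = (λ - μ) Gλ S Gμ`. Since `Gλ A(λ)` is the
identity on `E = R(Gλ) ⊇ R(Gμ)`, one has `Gλ A(λ) Gμ = Gμ`; since `1 - A(μ) Gμ` maps `Y` into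
`N(Gμ) = F ⊆ N(Gλ)`, one has `Gλ A(μ) Gμ = Gλ`. -/

namespace LinearMap

variable {R M N : Type*}

theorem comp_comp_of_range_le [Semiring R] [AddCommMonoid M] [AddCommMonoid N]
    [Module R M] [Module R N] {A : M →ₗ[R] N} {G G' : N →ₗ[R] M}
    (hG : G ∘ₗ A ∘ₗ G = G) (hrange : range G' ≤ range G) :
    G ∘ₗ A ∘ₗ G' = G' := by
  ext y
  obtain ⟨z, hz⟩ := hrange ⟨y, rfl⟩
  change G (A (G' y)) = G' y
  rw [← hz]
  exact LinearMap.congr_fun hG z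

variable [Ring R] [AddCommGroup M] [AddCommGroup N] [Module R M] [Module R N]

theorem comp_comp_of_ker_le {A : M →ₗ[R] N} {G G' : N →ₗ[R] M}
    (hG' : G' ∘ₗ A ∘ₗ G' = G') (hker : ker G' ≤ ker G) :
    G ∘ₗ A ∘ₗ G' = G := by
  ext y
  have hmem : y - A (G' y) ∈ ker G' := by
    rw [mem_ker, map_sub, sub_eq_zero]
    exact (LinearMap.congr_fun hG' y).symm
  have hG := hker hmem
  rw [mem_ker, map_sub, sub_eq_zero] at hG
  exact hG.symm

theorem sub_eq_comp_sub_comp_of_outer_inverses {A₁ A₂ : M →ₗ[R] N} {G₁ G₂ : N →ₗ[R] M}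
    (h₁ : G₁ ∘ₗ A₁ ∘ₗ G₁ = G₁) (h₂ : G₂ ∘ₗ A₂ ∘ₗ G₂ = G₂)
    (hrange : range G₂ ≤ range G₁) (hker : ker G₂ ≤ ker G₁) :
    G₁ - G₂ = G₁ ∘ₗ (A₂ - A₁) ∘ₗ G₂ := by
  rw [sub_comp, comp_sub, comp_comp_of_ker_le h₂ hker, comp_comp_of_range_le h₁ hrange]

end LinearMap

theorem resolvent_identity_of_fixed_complements_general
    {X Y : Type*} [NormedAddCommGroup X] [NormedSpace ℂ X]
    [NormedAddCommGroup Y] [NormedSpace ℂ Y]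
    (T S : X →L[ℂ] Y) (lam mu : ℂ) (Gl Gm : Y →L[ℂ] X)
    (E : Submodule ℂ X) (F : Submodule ℂ Y)
    (hl2 : Gl.comp ((T - lam • S).comp Gl) = Gl)
    (hm2 : Gm.comp ((T - mu • S).comp Gm) = Gm)
    (hkerl : LinearMap.ker (Gl : Y →ₗ[ℂ] X) = F) (hkerm : LinearMap.ker (Gm : Y →ₗ[ℂ] X) = F)
    (hranl : LinearMap.range (Gl : Y →ₗ[ℂ] X) = E) (hranm : LinearMap.range (Gm : Y →ₗ[ℂ] X) = E) :
    Gl - Gm = (lam - mu) • (Gl.comp (S.comp Gm)) := by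
  have key := LinearMap.sub_eq_comp_sub_comp_of_outer_inverses
    (congrArg ContinuousLinearMap.toLinearMap hl2) (congrArg ContinuousLinearMap.toLinearMap hm2)
    (hranm.trans hranl.symm).le (hkerm.trans hkerl.symm).le
  apply ContinuousLinearMap.coe_injective
  rw [ContinuousLinearMap.toLinearMap_sub, key]
  ext y
  simp [sub_smul]

/-- If `G(λ)` and `G(μ)` are generalized inverses of `T - λS` and `T - μS`
with the same kernel `F` and the same range `E` (which are fixed complements of the
corresponding kernels and ranges), then the resolvent identity
`G(λ) - G(μ) = (λ - μ) G(λ) S G(μ)` holds. -/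
theorem resolvent_identity_of_fixed_complements
    {X Y : Type*} [NormedAddCommGroup X] [NormedSpace ℂ X] [CompleteSpace X]
    [NormedAddCommGroup Y] [NormedSpace ℂ Y] [CompleteSpace Y]
    (T S : X →L[ℂ] Y) (lam mu : ℂ) (Gl Gm : Y →L[ℂ] X)
    (E : Submodule ℂ X) (F : Submodule ℂ Y)
    (hEl : IsCompl (LinearMap.ker ((T - lam • S : X →L[ℂ] Y) : X →ₗ[ℂ] Y)) E)
    (hEm : IsCompl (LinearMap.ker ((T - mu • S : X →L[ℂ] Y) : X →ₗ[ℂ] Y)) E)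
    (hFl : IsCompl (LinearMap.range ((T - lam • S : X →L[ℂ] Y) : X →ₗ[ℂ] Y)) F)
    (hFm : IsCompl (LinearMap.range ((T - mu • S : X →L[ℂ] Y) : X →ₗ[ℂ] Y)) F)
    (hl1 : (T - lam • S).comp (Gl.comp (T - lam • S)) = T - lam • S)
    (hl2 : Gl.comp ((T - lam • S).comp Gl) = Gl)
    (hm1 : (T - mu • S).comp (Gm.comp (T - mu • S)) = T - mu • S)
    (hm2 : Gm.comp ((T - mu • S).comp Gm) = Gm)
    (hkerl : LinearMap.ker (Gl : Y →ₗ[ℂ] X) = F) (hkerm : LinearMap.ker (Gm : Y →ₗ[ℂ] X) = F)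
    (hranl : LinearMap.range (Gl : Y →ₗ[ℂ] X) = E) (hranm : LinearMap.range (Gm : Y →ₗ[ℂ] X) = E) :
    Gl - Gm = (lam - mu) • (Gl.comp (S.comp Gm)) :=
  resolvent_identity_of_fixed_complements_general T S lam mu Gl Gm E F hl2 hm2 hkerl hkerm hranl
    hranm
end
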